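/- arXiv:2508.17529 — 7 statements merged into one kernel-verified Lean document; each statement's English description precedes it below -/
import Mathlib

section
/- Let {N_ω}_{ω∈Ω} be a family of linear maps on an Ω-associative algebra A satisfying N_ω ∘ N_ω = id_A for all ω ∈ Ω. Then {N_ω} is a Nijenhuis family if and only if {N_ω} is a modified Rota–Baxter family of weight −1, i.e., N_α(a) ·_{α,β} N_β(b) = N_{αβ}(N_α(a) ·_{α,β} b + a ·_{α,β} N_β(b)) − a ·_{α,β} b. -/
/-- A Nijenhuis family on an `Ω`-associative algebra. -/
def NijenhuisFamily {k Ω A : Type*} [Field k] [Semigroup Ω] [AddCommGroup A]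
    [Module k A] (μ : Ω → Ω → A →ₗ[k] A →ₗ[k] A) (N : Ω → A →ₗ[k] A) : Prop :=
  ∀ (α β : Ω) (a b : A),
    μ α β (N α a) (N β b)
      = N (α * β) (μ α β (N α a) b + μ α β a (N β b) - N (α * β) (μ α β a b))

/-- A modified Rota–Baxter family of weight `-1`. -/
def ModifiedRotaBaxterFamilyNegOne {k Ω A : Type*} [Field k] [Semigroup Ω]
    [AddCommGroup A] [Module k A]
    (μ : Ω → Ω → A →ₗ[k] A →ₗ[k] A) (N : Ω → A →ₗ[k] A) : Prop :=
  ∀ (α β : Ω) (a b : A),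
    μ α β (N α a) (N β b)
      = N (α * β) (μ α β (N α a) b + μ α β a (N β b)) - μ α β a b

theorem LinearMap.map_sub_apply_of_comp_self_eq_id {R M : Type*} [Semiring R] [AddCommGroup M]
    [Module R M] {f : M →ₗ[R] M} (hf : f.comp f = LinearMap.id) (x y : M) :
    f (x - f y) = f x - y := by
  rw [map_sub, ← LinearMap.comp_apply, hf, LinearMap.id_apply]

theorem nijenhuis_iff_modifiedRotaBaxter_of_involutive_general
    {k : Type*} [Field k] {Ω : Type*} [Semigroup Ω]
    {A : Type*} [AddCommGroup A] [Module k A]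
    (μ : Ω → Ω → A →ₗ[k] A →ₗ[k] A)
    (N : Ω → A →ₗ[k] A)
    (hinv : ∀ ω : Ω, (N ω).comp (N ω) = LinearMap.id) :
    NijenhuisFamily μ N ↔ ModifiedRotaBaxterFamilyNegOne μ N := by
  unfold NijenhuisFamily ModifiedRotaBaxterFamilyNegOne
  simp only [LinearMap.map_sub_apply_of_comp_self_eq_id (hinv _)]

/-- If `N_ω² = id` then `N` is a Nijenhuis family iff it is a modified
Rota–Baxter family of weight `-1`. -/
theorem nijenhuis_iff_modifiedRotaBaxter_of_involutive
    {k : Type*} [Field k] {Ω : Type*} [Semigroup Ω]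
    {A : Type*} [AddCommGroup A] [Module k A]
    (μ : Ω → Ω → A →ₗ[k] A →ₗ[k] A)
    (hassoc : ∀ (α β γ : Ω) (a b c : A),
      μ (α * β) γ (μ α β a b) c = μ α (β * γ) a (μ β γ b c))
    (N : Ω → A →ₗ[k] A)
    (hinv : ∀ ω : Ω, (N ω).comp (N ω) = LinearMap.id) :
    NijenhuisFamily μ N ↔ ModifiedRotaBaxterFamilyNegOne μ N :=
  nijenhuis_iff_modifiedRotaBaxter_of_involutive_general μ N hinv
end

section
/- Let (A, {·_{α,β}}, {N_ω}) be a Nijenhuis family Ω-associative algebra. Define a ⋆_{α,β} b := a ·_{α,β} N_β(b) + N_α(a) ·_{α,β} b − N_{αβ}(a ·_{α,β} b). Then the family {⋆_{α,β}} satisfies the Ω-associativity identity (a ⋆_{α,β} b) ⋆_{αβ,γ} c = a ⋆_{α,βγ} (b ⋆_{β,γ} c) for all a, b, c ∈ A and α, β, γ ∈ Ω; hence (A, {⋆_{α,β}}) is an Ω-associative algebra. -/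
section NijenhuisStar

variable {k Ω A : Type*} [Field k] [Semigroup Ω] [AddCommGroup A] [Module k A]
  (μ : Ω → Ω → A →ₗ[k] A →ₗ[k] A) (N : Ω → A →ₗ[k] A)

def nijenhuisStar (α β : Ω) (a b : A) : A :=
  μ α β a (N β b) + μ α β (N α a) b - N (α * β) (μ α β a b)

variable {μ N}

theorem NijenhuisFamily.map_nijenhuisStar (hN : NijenhuisFamily μ N) (α β : Ω) (a b : A) :
    N (α * β) (nijenhuisStar μ N α β a b) = μ α β (N α a) (N β b) := by
  rw [nijenhuisStar, add_comm, hN]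

theorem nijenhuisStar_nijenhuisStar_left
    (hassoc : ∀ (α β γ : Ω) (a b c : A),
      μ (α * β) γ (μ α β a b) c = μ α (β * γ) a (μ β γ b c))
    (hN : NijenhuisFamily μ N) (α β γ : Ω) (a b c : A) :
    nijenhuisStar μ N (α * β) γ (nijenhuisStar μ N α β a b) c =
      μ α (β * γ) a (μ β γ (N β b) (N γ c)) + μ α (β * γ) (N α a) (μ β γ b (N γ c))
        + μ α (β * γ) (N α a) (μ β γ (N β b) c)
        - N (α * (β * γ)) (μ α (β * γ) a (μ β γ (N β b) c) + μ α (β * γ) (N α a) (μ β γ b c)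
          + μ α (β * γ) a (μ β γ b (N γ c)) - N (α * (β * γ)) (μ α (β * γ) a (μ β γ b c))) := by
  rw [nijenhuisStar, hN.map_nijenhuisStar]
  simp only [nijenhuisStar, map_add, map_sub, LinearMap.add_apply, LinearMap.sub_apply]
  rw [hN (α * β) γ (μ α β a b) c]
  simp only [map_add, map_sub, hassoc, mul_assoc]
  abel

theorem nijenhuisStar_nijenhuisStar_right (hN : NijenhuisFamily μ N) (α β γ : Ω) (a b c : A) :
    nijenhuisStar μ N α (β * γ) a (nijenhuisStar μ N β γ b c) =
      μ α (β * γ) a (μ β γ (N β b) (N γ c)) + μ α (β * γ) (N α a) (μ β γ b (N γ c))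
        + μ α (β * γ) (N α a) (μ β γ (N β b) c)
        - N (α * (β * γ)) (μ α (β * γ) a (μ β γ (N β b) c) + μ α (β * γ) (N α a) (μ β γ b c)
          + μ α (β * γ) a (μ β γ b (N γ c)) - N (α * (β * γ)) (μ α (β * γ) a (μ β γ b c))) := by
  rw [nijenhuisStar, hN.map_nijenhuisStar]
  simp only [nijenhuisStar, map_add, map_sub]
  rw [hN α (β * γ) a (μ β γ b c)]
  simp only [map_add, map_sub]
  abel

theorem nijenhuisStar_assoc
    (hassoc : ∀ (α β γ : Ω) (a b c : A),
      μ (α * β) γ (μ α β a b) c = μ α (β * γ) a (μ β γ b c))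
    (hN : NijenhuisFamily μ N) (α β γ : Ω) (a b c : A) :
    nijenhuisStar μ N (α * β) γ (nijenhuisStar μ N α β a b) c =
      nijenhuisStar μ N α (β * γ) a (nijenhuisStar μ N β γ b c) := by
  rw [nijenhuisStar_nijenhuisStar_left hassoc hN, nijenhuisStar_nijenhuisStar_right hN]

end NijenhuisStar

/-- The deformed product `a ⋆_{α,β} b := a ·_{α,β} N_β b + N_α a ·_{α,β} b −
N_{αβ}(a ·_{α,β} b)` is `Ω`-associative. -/
theorem star_product_omega_assoc
    {k : Type*} [Field k] {Ω : Type*} [Semigroup Ω]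
    {A : Type*} [AddCommGroup A] [Module k A]
    (μ : Ω → Ω → A →ₗ[k] A →ₗ[k] A)
    (hassoc : ∀ (α β γ : Ω) (a b c : A),
      μ (α * β) γ (μ α β a b) c = μ α (β * γ) a (μ β γ b c))
    (N : Ω → A →ₗ[k] A) (hN : NijenhuisFamily μ N) :
    let star : Ω → Ω → A → A → A := fun α β a b =>
      μ α β a (N β b) + μ α β (N α a) b - N (α * β) (μ α β a b)
    ∀ (α β γ : Ω) (a b c : A),
      star (α * β) γ (star α β a b) c = star α (β * γ) a (star β γ b c) :=
  nijenhuisStar_assoc hassoc hN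
end

section
/- Let (A, {·_{α,β}}, {N_ω}) be a Nijenhuis family Ω-associative algebra and define a ⋆_{α,β} b := a ·_{α,β} N_β(b) + N_α(a) ·_{α,β} b − N_{αβ}(a ·_{α,β} b). Then {N_ω} is also a Nijenhuis family on the Ω-associative algebra (A, {⋆_{α,β}}), i.e., N_α(a) ⋆_{α,β} N_β(b) = N_{αβ}(N_α(a) ⋆_{α,β} b + a ⋆_{α,β} N_β(b) − N_{αβ}(a ⋆_{α,β} b)) for all a, b ∈ A, α, β ∈ Ω. -/
namespace LinearMap

variable {R M : Type*} [CommSemiring R] [AddCommGroup M] [Module R M]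

/-- `NijenhuisFamily μ N` says exactly that `IsNijenhuis (μ α β) (N α) (N β) (N (α * β))` for all
`α β`. -/
def IsNijenhuis (μ : M →ₗ[R] M →ₗ[R] M) (N₁ N₂ N₁₂ : M →ₗ[R] M) : Prop :=
  ∀ x y, μ (N₁ x) (N₂ y) = N₁₂ (μ (N₁ x) y + μ x (N₂ y) - N₁₂ (μ x y))

def nijenhuisDeformation (μ : M →ₗ[R] M →ₗ[R] M) (N₁ N₂ N₁₂ : M →ₗ[R] M) :
    M →ₗ[R] M →ₗ[R] M :=
  μ.compl₂ N₂ + μ ∘ₗ N₁ - μ.compr₂ N₁₂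

@[simp]
theorem nijenhuisDeformation_apply (μ : M →ₗ[R] M →ₗ[R] M) (N₁ N₂ N₁₂ : M →ₗ[R] M) (x y : M) :
    nijenhuisDeformation μ N₁ N₂ N₁₂ x y = μ x (N₂ y) + μ (N₁ x) y - N₁₂ (μ x y) :=
  rfl

/-- Expanding both sides, each `μ (N₁ _) (N₂ _)` term is rewritten by the Nijenhuis identity,
after which the two sides agree as linear combinations. -/
theorem IsNijenhuis.nijenhuisDeformation {μ : M →ₗ[R] M →ₗ[R] M} {N₁ N₂ N₁₂ : M →ₗ[R] M}
    (h : IsNijenhuis μ N₁ N₂ N₁₂) :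
    IsNijenhuis (nijenhuisDeformation μ N₁ N₂ N₁₂) N₁ N₂ N₁₂ := by
  intro x y
  simp only [nijenhuisDeformation_apply]
  rw [h x (N₂ y), h (N₁ x) y, h x y]
  simp only [map_add, map_sub]
  abel

end LinearMap

theorem nijenhuis_for_star_product_general
    {k : Type*} [Field k] {Ω : Type*} [Semigroup Ω]
    {A : Type*} [AddCommGroup A] [Module k A]
    (μ : Ω → Ω → A →ₗ[k] A →ₗ[k] A)
    (N : Ω → A →ₗ[k] A) (hN : NijenhuisFamily μ N) :
    let star : Ω → Ω → A → A → A := fun α β a b =>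
      μ α β a (N β b) + μ α β (N α a) b - N (α * β) (μ α β a b)
    ∀ (α β : Ω) (a b : A),
      star α β (N α a) (N β b)
        = N (α * β) (star α β (N α a) b + star α β a (N β b)
            - N (α * β) (star α β a b)) :=
  fun α β => LinearMap.IsNijenhuis.nijenhuisDeformation (hN α β)

/-- `N` remains a Nijenhuis family for the deformed product `⋆`. -/
theorem nijenhuis_for_star_product
    {k : Type*} [Field k] {Ω : Type*} [Semigroup Ω]
    {A : Type*} [AddCommGroup A] [Module k A]
    (μ : Ω → Ω → A →ₗ[k] A →ₗ[k] A)
    (hassoc : ∀ (α β γ : Ω) (a b c : A),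
      μ (α * β) γ (μ α β a b) c = μ α (β * γ) a (μ β γ b c))
    (N : Ω → A →ₗ[k] A) (hN : NijenhuisFamily μ N) :
    let star : Ω → Ω → A → A → A := fun α β a b =>
      μ α β a (N β b) + μ α β (N α a) b - N (α * β) (μ α β a b)
    ∀ (α β : Ω) (a b : A),
      star α β (N α a) (N β b)
        = N (α * β) (star α β (N α a) b + star α β a (N β b)
            - N (α * β) (star α β a b)) :=
  nijenhuis_for_star_product_general μ N hN
end

section
/- Let (A, {·_{α,β}}, {N_ω}) be a Nijenhuis family Ω-associative algebra and (M, {N_{M,ω}}) a Nijenhuis family bimodule. Define a ▷_{α,β} m := N_α(a) ·_{α,β} m − N_{M,αβ}(a ·_{α,β} m) and m ◁_{α,β} a := m ·_{α,β} N_β(a) − N_{M,αβ}(m ·_{α,β} a). Then the middle compatibility holds: (a ▷_{α,β} m) ◁_{αβ,γ} b = a ▷_{α,βγ} (m ◁_{β,γ} b) for all a, b ∈ A and m ∈ M. -/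
/-!
`N_M` commutes with both new actions: `a ▷ N_M(m) = N_M(a ▷ m)` follows from the left
Nijenhuis bimodule identity and `N_M(m) ◁ b = N_M(m ◁ b)` from the right one. Expanding
`(a ▷ m) ◁ b` and `a ▷ (m ◁ b)` with these two rules and the middle compatibility of `M`
leaves the same four terms on both sides.
-/

section NewActions

variable {k Ω A M : Type*} [CommSemiring k] [Mul Ω] [AddCommGroup A] [Module k A]
  [AddCommGroup M] [Module k M]

/-- The new left action `a ▷_{α,β} m`. -/
def newLeftAction (l : Ω → Ω → A →ₗ[k] M →ₗ[k] M) (N : Ω → A →ₗ[k] A) (NM : Ω → M →ₗ[k] M)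
    (α β : Ω) (a : A) (m : M) : M :=
  l α β (N α a) m - NM (α * β) (l α β a m)

/-- The new right action `m ◁_{α,β} a`. -/
def newRightAction (r : Ω → Ω → M →ₗ[k] A →ₗ[k] M) (N : Ω → A →ₗ[k] A) (NM : Ω → M →ₗ[k] M)
    (α β : Ω) (m : M) (a : A) : M :=
  r α β m (N β a) - NM (α * β) (r α β m a)

theorem newLeftAction_sub (l : Ω → Ω → A →ₗ[k] M →ₗ[k] M) (N : Ω → A →ₗ[k] A)
    (NM : Ω → M →ₗ[k] M) (α β : Ω) (a : A) (m m' : M) :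
    newLeftAction l N NM α β a (m - m')
      = newLeftAction l N NM α β a m - newLeftAction l N NM α β a m' := by
  simp only [newLeftAction, map_sub]
  abel

theorem newRightAction_sub (r : Ω → Ω → M →ₗ[k] A →ₗ[k] M) (N : Ω → A →ₗ[k] A)
    (NM : Ω → M →ₗ[k] M) (α β : Ω) (m m' : M) (a : A) :
    newRightAction r N NM α β (m - m') a
      = newRightAction r N NM α β m a - newRightAction r N NM α β m' a := by
  simp only [newRightAction, map_sub, LinearMap.sub_apply]
  abel

theorem newLeftAction_map (l : Ω → Ω → A →ₗ[k] M →ₗ[k] M) (N : Ω → A →ₗ[k] A)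
    (NM : Ω → M →ₗ[k] M)
    (hNMl : ∀ (α β : Ω) (a : A) (m : M),
      l α β (N α a) (NM β m)
        = NM (α * β) (l α β a (NM β m) + l α β (N α a) m - NM (α * β) (l α β a m)))
    (α β : Ω) (a : A) (m : M) :
    newLeftAction l N NM α β a (NM β m) = NM (α * β) (newLeftAction l N NM α β a m) := by
  simp only [newLeftAction, hNMl, map_sub, map_add]
  abel

theorem newRightAction_map (r : Ω → Ω → M →ₗ[k] A →ₗ[k] M) (N : Ω → A →ₗ[k] A)
    (NM : Ω → M →ₗ[k] M)
    (hNMr : ∀ (α β : Ω) (m : M) (a : A),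
      r α β (NM α m) (N β a)
        = NM (α * β) (r α β m (N β a) + r α β (NM α m) a - NM (α * β) (r α β m a)))
    (α β : Ω) (m : M) (a : A) :
    newRightAction r N NM α β (NM α m) a = NM (α * β) (newRightAction r N NM α β m a) := by
  simp only [newRightAction, hNMr, map_sub, map_add]
  abel

end NewActions

theorem new_actions_middle_compatibility_general
    {k : Type*} [Field k] {Ω : Type*} [Semigroup Ω]
    {A : Type*} [AddCommGroup A] [Module k A]
    {M : Type*} [AddCommGroup M] [Module k M]
    (l : Ω → Ω → A →ₗ[k] M →ₗ[k] M) (r : Ω → Ω → M →ₗ[k] A →ₗ[k] M)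
    (hmid : ∀ (α β γ : Ω) (a : A) (m : M) (b : A),
      r (α * β) γ (l α β a m) b = l α (β * γ) a (r β γ m b))
    (N : Ω → A →ₗ[k] A)
    (NM : Ω → M →ₗ[k] M)
    (hNMl : ∀ (α β : Ω) (a : A) (m : M),
      l α β (N α a) (NM β m)
        = NM (α * β) (l α β a (NM β m) + l α β (N α a) m
            - NM (α * β) (l α β a m)))
    (hNMr : ∀ (α β : Ω) (m : M) (a : A),
      r α β (NM α m) (N β a)
        = NM (α * β) (r α β m (N β a) + r α β (NM α m) a
            - NM (α * β) (r α β m a))) :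
    let rhd : Ω → Ω → A → M → M := fun α β a m =>
      l α β (N α a) m - NM (α * β) (l α β a m)
    let lhd : Ω → Ω → M → A → M := fun α β m a =>
      r α β m (N β a) - NM (α * β) (r α β m a)
    ∀ (α β γ : Ω) (a : A) (m : M) (b : A),
      lhd (α * β) γ (rhd α β a m) b = rhd α (β * γ) a (lhd β γ m b) := by
  intro rhd lhd α β γ a m b
  change newRightAction r N NM (α * β) γ (l α β (N α a) m - NM (α * β) (l α β a m)) b
    = newLeftAction l N NM α (β * γ) a (r β γ m (N γ b) - NM (β * γ) (r β γ m b))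
  rw [newRightAction_sub, newRightAction_map r N NM hNMr, newLeftAction_sub,
    newLeftAction_map l N NM hNMl]
  simp only [newRightAction, newLeftAction, hmid, map_sub, mul_assoc]
  abel

/-- Middle compatibility `(a ▷ m) ◁ b = a ▷ (m ◁ b)` for the new actions. -/
theorem new_actions_middle_compatibility
    {k : Type*} [Field k] {Ω : Type*} [Semigroup Ω]
    {A : Type*} [AddCommGroup A] [Module k A]
    {M : Type*} [AddCommGroup M] [Module k M]
    (μ : Ω → Ω → A →ₗ[k] A →ₗ[k] A)
    (hassoc : ∀ (α β γ : Ω) (a b c : A),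
      μ (α * β) γ (μ α β a b) c = μ α (β * γ) a (μ β γ b c))
    (l : Ω → Ω → A →ₗ[k] M →ₗ[k] M) (r : Ω → Ω → M →ₗ[k] A →ₗ[k] M)
    (hl : ∀ (α β γ : Ω) (a b : A) (m : M),
      l (α * β) γ (μ α β a b) m = l α (β * γ) a (l β γ b m))
    (hmid : ∀ (α β γ : Ω) (a : A) (m : M) (b : A),
      r (α * β) γ (l α β a m) b = l α (β * γ) a (r β γ m b))
    (hr : ∀ (α β γ : Ω) (m : M) (a b : A),
      r (α * β) γ (r α β m a) b = r α (β * γ) m (μ β γ a b))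
    (N : Ω → A →ₗ[k] A) (hN : NijenhuisFamily μ N)
    (NM : Ω → M →ₗ[k] M)
    (hNMl : ∀ (α β : Ω) (a : A) (m : M),
      l α β (N α a) (NM β m)
        = NM (α * β) (l α β a (NM β m) + l α β (N α a) m
            - NM (α * β) (l α β a m)))
    (hNMr : ∀ (α β : Ω) (m : M) (a : A),
      r α β (NM α m) (N β a)
        = NM (α * β) (r α β m (N β a) + r α β (NM α m) a
            - NM (α * β) (r α β m a))) :
    let rhd : Ω → Ω → A → M → M := fun α β a m =>
      l α β (N α a) m - NM (α * β) (l α β a m)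
    let lhd : Ω → Ω → M → A → M := fun α β m a =>
      r α β m (N β a) - NM (α * β) (r α β m a)
    ∀ (α β γ : Ω) (a : A) (m : M) (b : A),
      lhd (α * β) γ (rhd α β a m) b = rhd α (β * γ) a (lhd β γ m b) :=
  new_actions_middle_compatibility_general l r hmid N NM hNMl hNMr
end

section
/- Let (A, μ, N) be a Nijenhuis family Ω-associative algebra, and let ψ_t = id + ψ₁ t + ... be a formal isomorphism between two one-parameter formal deformations (A[[t]], μ'_t, N'_t) and (A[[t]], μ_t, N_t). Then the infinitesimals satisfy μ'_{1,α,β} = μ_{1,α,β} + μ_{α,β}∘(id⊗ψ_{1,β}) − ψ_{1,αβ}∘μ_{α,β} + μ_{α,β}∘(ψ_{1,α}⊗id) and N'_{1,ω} = N_{1,ω} + N_ω∘ψ_{1,ω} − ψ_{1,ω}∘N_ω. Hence (μ'₁, N'₁) − (μ₁, N₁) = d¹(ψ₁, 0), so the infinitesimals of equivalent deformations are cohomologous in H²_NFA(A). -/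
open Finset

theorem Finset.Nat.sum_antidiagonal_one {M : Type*} [AddCommMonoid M] (f : ℕ × ℕ → M) :
    ∑ p ∈ antidiagonal 1, f p = f (0, 1) + f (1, 0) := by
  rw [Nat.sum_antidiagonal_succ, Nat.antidiagonal_zero, sum_singleton]

section FirstOrder

variable {R M : Type*} [CommSemiring R] [AddCommGroup M] [Module R M]

theorem mul_coeff_one_eq_of_formal_iso (μ : M →ₗ[R] M →ₗ[R] M)
    (μt μ't : ℕ → M →ₗ[R] M →ₗ[R] M) (φ φ₁ φ₂ : ℕ → M →ₗ[R] M)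
    (hμ0 : μt 0 = μ) (hμ'0 : μ't 0 = μ)
    (hφ0 : φ 0 = LinearMap.id) (hφ₁0 : φ₁ 0 = LinearMap.id) (hφ₂0 : φ₂ 0 = LinearMap.id)
    (a b : M)
    (hiso : ∑ p ∈ antidiagonal 1, φ p.1 (μ't p.2 a b)
      = ∑ p ∈ antidiagonal 1, ∑ q ∈ antidiagonal p.2, μt p.1 (φ₁ q.1 a) (φ₂ q.2 b)) :
    μ't 1 a b = μt 1 a b + μ a (φ₂ 1 b) - φ 1 (μ a b) + μ (φ₁ 1 a) b := by
  simp only [Nat.sum_antidiagonal_one, Nat.antidiagonal_zero, sum_singleton, hμ0, hμ'0,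
    hφ0, hφ₁0, hφ₂0, LinearMap.id_apply] at hiso
  rw [eq_sub_of_add_eq hiso]
  abel

theorem endo_coeff_one_eq_of_formal_iso (N : M →ₗ[R] M) (Nt N't φ : ℕ → M →ₗ[R] M)
    (hN0 : Nt 0 = N) (hN'0 : N't 0 = N) (hφ0 : φ 0 = LinearMap.id) (a : M)
    (hiso : ∑ p ∈ antidiagonal 1, φ p.1 (N't p.2 a) = ∑ p ∈ antidiagonal 1, Nt p.1 (φ p.2 a)) :
    N't 1 a = Nt 1 a + N (φ 1 a) - φ 1 (N a) := by
  simp only [Nat.sum_antidiagonal_one, hN0, hN'0, hφ0, LinearMap.id_apply] at hiso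
  rw [eq_sub_of_add_eq hiso]
  abel

end FirstOrder

theorem equivalent_deformations_cohomologous_infinitesimals_general
    {k : Type*} [Field k] {Ω : Type*} [Semigroup Ω]
    {A : Type*} [AddCommGroup A] [Module k A]
    (μ : Ω → Ω → A →ₗ[k] A →ₗ[k] A)
    (N : Ω → A →ₗ[k] A)
    (μt μ't : ℕ → Ω → Ω → A →ₗ[k] A →ₗ[k] A) (Nt N't : ℕ → Ω → A →ₗ[k] A)
    (hμ0 : μt 0 = μ) (hμ'0 : μ't 0 = μ) (hN0 : Nt 0 = N) (hN'0 : N't 0 = N)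
    (ψ : ℕ → Ω → A →ₗ[k] A) (hψ0 : ∀ θ : Ω, ψ 0 θ = LinearMap.id)
    (hiso1 : ∀ (n : ℕ) (α β : Ω) (a b : A),
      ∑ p ∈ Finset.HasAntidiagonal.antidiagonal n, ψ p.1 (α * β) (μ't p.2 α β a b)
        = ∑ p ∈ Finset.HasAntidiagonal.antidiagonal n, ∑ q ∈ Finset.HasAntidiagonal.antidiagonal p.2,
            μt p.1 α β (ψ q.1 α a) (ψ q.2 β b))
    (hiso2 : ∀ (n : ℕ) (ω : Ω) (a : A),
      ∑ p ∈ Finset.HasAntidiagonal.antidiagonal n, ψ p.1 ω (N't p.2 ω a)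
        = ∑ p ∈ Finset.HasAntidiagonal.antidiagonal n, Nt p.1 ω (ψ p.2 ω a)) :
    (∀ (α β : Ω) (a b : A),
      μ't 1 α β a b
        = μt 1 α β a b + μ α β a (ψ 1 β b) - ψ 1 (α * β) (μ α β a b)
            + μ α β (ψ 1 α a) b)
    ∧ (∀ (ω : Ω) (a : A),
      N't 1 ω a = Nt 1 ω a + N ω (ψ 1 ω a) - ψ 1 ω (N ω a)) := by
  refine ⟨fun α β a b ↦ ?_, fun ω a ↦ ?_⟩
  · exact mul_coeff_one_eq_of_formal_iso (μ α β) (μt · α β) (μ't · α β)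
      (ψ · (α * β)) (ψ · α) (ψ · β) (congrFun₂ hμ0 α β) (congrFun₂ hμ'0 α β)
      (hψ0 _) (hψ0 α) (hψ0 β) a b (hiso1 1 α β a b)
  · exact endo_coeff_one_eq_of_formal_iso (N ω) (Nt · ω) (N't · ω) (ψ · ω)
      (congrFun hN0 ω) (congrFun hN'0 ω) (hψ0 ω) a (hiso2 1 ω a)

/-- If `ψ_t = id + ψ₁ t + ⋯` is a formal isomorphism between two one-parameter
formal deformations `(μ'_t, N'_t)` and `(μ_t, N_t)` of a Nijenhuis family
`Ω`-associative algebra `(A, μ, N)`, then the infinitesimals differ by the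
coboundary `d¹(ψ₁, 0)`:
`μ'₁ = μ₁ + μ∘(id⊗ψ₁) − ψ₁∘μ + μ∘(ψ₁⊗id)` and `N'₁ = N₁ + N∘ψ₁ − ψ₁∘N`. -/
theorem equivalent_deformations_cohomologous_infinitesimals
    {k : Type*} [Field k] {Ω : Type*} [Semigroup Ω]
    {A : Type*} [AddCommGroup A] [Module k A]
    (μ : Ω → Ω → A →ₗ[k] A →ₗ[k] A)
    (hassoc : ∀ (α β γ : Ω) (a b c : A),
      μ (α * β) γ (μ α β a b) c = μ α (β * γ) a (μ β γ b c))
    (N : Ω → A →ₗ[k] A) (hN : NijenhuisFamily μ N)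
    (μt μ't : ℕ → Ω → Ω → A →ₗ[k] A →ₗ[k] A) (Nt N't : ℕ → Ω → A →ₗ[k] A)
    (hμ0 : μt 0 = μ) (hμ'0 : μ't 0 = μ) (hN0 : Nt 0 = N) (hN'0 : N't 0 = N)
    (ψ : ℕ → Ω → A →ₗ[k] A) (hψ0 : ∀ θ : Ω, ψ 0 θ = LinearMap.id)
    (hiso1 : ∀ (n : ℕ) (α β : Ω) (a b : A),
      ∑ p ∈ Finset.HasAntidiagonal.antidiagonal n, ψ p.1 (α * β) (μ't p.2 α β a b)
        = ∑ p ∈ Finset.HasAntidiagonal.antidiagonal n, ∑ q ∈ Finset.HasAntidiagonal.antidiagonal p.2,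
            μt p.1 α β (ψ q.1 α a) (ψ q.2 β b))
    (hiso2 : ∀ (n : ℕ) (ω : Ω) (a : A),
      ∑ p ∈ Finset.HasAntidiagonal.antidiagonal n, ψ p.1 ω (N't p.2 ω a)
        = ∑ p ∈ Finset.HasAntidiagonal.antidiagonal n, Nt p.1 ω (ψ p.2 ω a)) :
    (∀ (α β : Ω) (a b : A),
      μ't 1 α β a b
        = μt 1 α β a b + μ α β a (ψ 1 β b) - ψ 1 (α * β) (μ α β a b)
            + μ α β (ψ 1 α a) b)
    ∧ (∀ (ω : Ω) (a : A),
      N't 1 ω a = Nt 1 ω a + N ω (ψ 1 ω a) - ψ 1 ω (N ω a)) :=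
  equivalent_deformations_cohomologous_infinitesimals_general μ N μt μ't Nt N't hμ0 hμ'0 hN0 hN'0 ψ
    hψ0 hiso1 hiso2
end

section
/- Let 0 → M → Â → A → 0 be an abelian extension of Nijenhuis family Ω-associative algebras (where all products on M vanish), and let {s_ω} be a family of sections with π_ω ∘ s_ω = id_A. Define a ·_{α,β} m := s_α(a) ·_{α,β} m and m ·_{α,β} a := m ·_{α,β} s_β(a). Then (M, {N_{M,ω}}) is a Nijenhuis family bimodule over (A, {·_{α,β}}, {N_ω}). -/
section SquareZeroIdeal

variable {k A Ahat M : Type*} [CommRing k]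
  [AddCommGroup A] [Module k A] [AddCommGroup Ahat] [Module k Ahat] [AddCommGroup M] [Module k M]
  {i : M →ₗ[k] Ahat} {π : Ahat →ₗ[k] A}

theorem sub_mem_range_of_map_eq (hexact : LinearMap.range i = LinearMap.ker π) {x y : Ahat}
    (h : π x = π y) : x - y ∈ LinearMap.range i :=
  hexact ▸ LinearMap.sub_mem_ker_iff.2 h

theorem map_incl_eq_zero (hexact : LinearMap.range i = LinearMap.ker π) (u : M) :
    π (i u) = 0 :=
  LinearMap.mem_ker.1 (hexact ▸ LinearMap.mem_range_self i u)

variable {m : Ahat →ₗ[k] Ahat →ₗ[k] Ahat} {mA : A →ₗ[k] A →ₗ[k] A}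

theorem mul_incl_mem_range (hexact : LinearMap.range i = LinearMap.ker π)
    (hπm : ∀ x y, π (m x y) = mA (π x) (π y)) (x : Ahat) (u : M) :
    m x (i u) ∈ LinearMap.range i := by
  rw [hexact, LinearMap.mem_ker, hπm, map_incl_eq_zero hexact, map_zero]

theorem incl_mul_mem_range (hexact : LinearMap.range i = LinearMap.ker π)
    (hπm : ∀ x y, π (m x y) = mA (π x) (π y)) (u : M) (x : Ahat) :
    m (i u) x ∈ LinearMap.range i := by
  rw [hexact, LinearMap.mem_ker, hπm, map_incl_eq_zero hexact, map_zero, LinearMap.zero_apply]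

theorem mul_incl_eq_of_sub_mem_range (hM : ∀ u v, m (i u) (i v) = 0) {x y : Ahat}
    (h : x - y ∈ LinearMap.range i) (u : M) : m x (i u) = m y (i u) := by
  obtain ⟨w, hw⟩ := h
  rw [← sub_eq_zero, ← LinearMap.sub_apply, ← map_sub, ← hw, hM]

theorem incl_mul_eq_of_sub_mem_range (hM : ∀ u v, m (i u) (i v) = 0) {x y : Ahat}
    (h : x - y ∈ LinearMap.range i) (u : M) : m (i u) x = m (i u) y := by
  obtain ⟨w, hw⟩ := h
  rw [← sub_eq_zero, ← map_sub, ← hw, hM]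

end SquareZeroIdeal

namespace NijenhuisFamily

variable {k Ω Ahat M : Type*} [Field k] [Semigroup Ω]
  [AddCommGroup Ahat] [Module k Ahat] [AddCommGroup M] [Module k M]
  {μh : Ω → Ω → Ahat →ₗ[k] Ahat →ₗ[k] Ahat} {Nh : Ω → Ahat →ₗ[k] Ahat}
  {NM : Ω → M →ₗ[k] M} {i : M →ₗ[k] Ahat}

theorem mul_incl_of_sub_mem_range (hNh : NijenhuisFamily μh Nh)
    (hiN : ∀ ω m, Nh ω (i m) = i (NM ω m)) (hM : ∀ α β u v, μh α β (i u) (i v) = 0)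
    {α : Ω} {x y : Ahat} (h : y - Nh α x ∈ LinearMap.range i) (β : Ω) (m : M) :
    μh α β y (i (NM β m))
      = Nh (α * β) (μh α β x (i (NM β m)) + μh α β y (i m) - Nh (α * β) (μh α β x (i m))) := by
  rw [mul_incl_eq_of_sub_mem_range (hM α β) h, mul_incl_eq_of_sub_mem_range (hM α β) h, ← hiN,
    hNh α β x (i m), add_comm]

theorem incl_mul_of_sub_mem_range (hNh : NijenhuisFamily μh Nh)
    (hiN : ∀ ω m, Nh ω (i m) = i (NM ω m)) (hM : ∀ α β u v, μh α β (i u) (i v) = 0)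
    {β : Ω} {x y : Ahat} (h : y - Nh β x ∈ LinearMap.range i) (α : Ω) (m : M) :
    μh α β (i (NM α m)) y
      = Nh (α * β) (μh α β (i m) y + μh α β (i (NM α m)) x - Nh (α * β) (μh α β (i m) x)) := by
  rw [incl_mul_eq_of_sub_mem_range (hM α β) h, incl_mul_eq_of_sub_mem_range (hM α β) h, ← hiN,
    hNh α β (i m) x, add_comm]

end NijenhuisFamily

/-- The actions on `M` and their identities are expressed in `Â` through the inclusion `i`. -/
theorem abelian_extension_induces_bimodule_general
    {k : Type*} [Field k] {Ω : Type*} [Semigroup Ω]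
    {A : Type*} [AddCommGroup A] [Module k A]
    {Ahat : Type*} [AddCommGroup Ahat] [Module k Ahat]
    {M : Type*} [AddCommGroup M] [Module k M]
    (μ : Ω → Ω → A →ₗ[k] A →ₗ[k] A)
    (N : Ω → A →ₗ[k] A)
    (μh : Ω → Ω → Ahat →ₗ[k] Ahat →ₗ[k] Ahat)
    (hassoch : ∀ (α β γ : Ω) (x y z : Ahat),
      μh (α * β) γ (μh α β x y) z = μh α (β * γ) x (μh β γ y z))
    (Nh : Ω → Ahat →ₗ[k] Ahat) (hNh : NijenhuisFamily μh Nh)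
    (NM : Ω → M →ₗ[k] M)
    (i : M →ₗ[k] Ahat) (π : Ahat →ₗ[k] A)
    (hexact : LinearMap.range i = LinearMap.ker π)
    (hπmul : ∀ (α β : Ω) (x y : Ahat), π (μh α β x y) = μ α β (π x) (π y))
    (hπN : ∀ (ω : Ω) (x : Ahat), π (Nh ω x) = N ω (π x))
    (hiN : ∀ (ω : Ω) (m : M), Nh ω (i m) = i (NM ω m))
    (hMzero : ∀ (α β : Ω) (u v : M), μh α β (i u) (i v) = 0)
    (s : Ω → A →ₗ[k] Ahat) (hs : ∀ (ω : Ω) (a : A), π (s ω a) = a) :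
    -- the actions preserve M
    (∀ (α β : Ω) (a : A) (m : M), μh α β (s α a) (i m) ∈ LinearMap.range i) ∧
    (∀ (α β : Ω) (m : M) (a : A), μh α β (i m) (s β a) ∈ LinearMap.range i) ∧
    -- the three bimodule axioms
    (∀ (α β γ : Ω) (a b : A) (m : M),
      μh (α * β) γ (s (α * β) (μ α β a b)) (i m)
        = μh α (β * γ) (s α a) (μh β γ (s β b) (i m))) ∧
    (∀ (α β γ : Ω) (a : A) (m : M) (b : A),
      μh (α * β) γ (μh α β (s α a) (i m)) (s γ b)
        = μh α (β * γ) (s α a) (μh β γ (i m) (s γ b))) ∧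
    (∀ (α β γ : Ω) (m : M) (a b : A),
      μh (α * β) γ (μh α β (i m) (s β a)) (s γ b)
        = μh α (β * γ) (i m) (s (β * γ) (μ β γ a b))) ∧
    -- the two Nijenhuis-family-bimodule identities
    (∀ (α β : Ω) (a : A) (m : M),
      μh α β (s α (N α a)) (i (NM β m))
        = Nh (α * β) (μh α β (s α a) (i (NM β m))
            + μh α β (s α (N α a)) (i m)
            - Nh (α * β) (μh α β (s α a) (i m)))) ∧
    (∀ (α β : Ω) (m : M) (a : A),
      μh α β (i (NM α m)) (s β (N β a))
        = Nh (α * β) (μh α β (i m) (s β (N β a))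
            + μh α β (i (NM α m)) (s β a)
            - Nh (α * β) (μh α β (i m) (s β a)))) := by
  have hsmul : ∀ α β a b, s (α * β) (μ α β a b) - μh α β (s α a) (s β b) ∈ LinearMap.range i :=
    fun α β a b => sub_mem_range_of_map_eq hexact (by rw [hπmul, hs, hs, hs])
  have hsN : ∀ ω a, s ω (N ω a) - Nh ω (s ω a) ∈ LinearMap.range i :=
    fun ω a => sub_mem_range_of_map_eq hexact (by rw [hπN, hs, hs])
  refine ⟨fun α β a m => mul_incl_mem_range hexact (hπmul α β) _ m,
    fun α β m a => incl_mul_mem_range hexact (hπmul α β) m _, ?_,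
    fun α β γ _ _ _ => hassoch α β γ _ _ _, ?_,
    fun α β a m => hNh.mul_incl_of_sub_mem_range hiN hMzero (hsN α a) β m,
    fun α β m a => hNh.incl_mul_of_sub_mem_range hiN hMzero (hsN β a) α m⟩
  · intro α β γ a b m
    rw [mul_incl_eq_of_sub_mem_range (hMzero _ _) (hsmul α β a b), hassoch]
  · intro α β γ m a b
    rw [incl_mul_eq_of_sub_mem_range (hMzero _ _) (hsmul β γ a b), hassoch]

/-- Given an abelian extension `0 → M → Â → A → 0` of Nijenhuis family
`Ω`-associative algebras (zero multiplication on `M`) and a family of sections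
`s`, the actions `a · m := s_α(a) ·̂ m` and `m · a := m ·̂ s_β(a)` make `M`
a Nijenhuis family bimodule over `(A, μ, N)`; all identities are expressed in
`Â` via the inclusion `i`. -/
theorem abelian_extension_induces_bimodule
    {k : Type*} [Field k] {Ω : Type*} [Semigroup Ω]
    {A : Type*} [AddCommGroup A] [Module k A]
    {Ahat : Type*} [AddCommGroup Ahat] [Module k Ahat]
    {M : Type*} [AddCommGroup M] [Module k M]
    (μ : Ω → Ω → A →ₗ[k] A →ₗ[k] A)
    (hassoc : ∀ (α β γ : Ω) (a b c : A),
      μ (α * β) γ (μ α β a b) c = μ α (β * γ) a (μ β γ b c))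
    (N : Ω → A →ₗ[k] A) (hN : NijenhuisFamily μ N)
    (μh : Ω → Ω → Ahat →ₗ[k] Ahat →ₗ[k] Ahat)
    (hassoch : ∀ (α β γ : Ω) (x y z : Ahat),
      μh (α * β) γ (μh α β x y) z = μh α (β * γ) x (μh β γ y z))
    (Nh : Ω → Ahat →ₗ[k] Ahat) (hNh : NijenhuisFamily μh Nh)
    (NM : Ω → M →ₗ[k] M)
    (i : M →ₗ[k] Ahat) (π : Ahat →ₗ[k] A)
    (hi : Function.Injective i) (hπ : Function.Surjective π)
    (hexact : LinearMap.range i = LinearMap.ker π)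
    (hπmul : ∀ (α β : Ω) (x y : Ahat), π (μh α β x y) = μ α β (π x) (π y))
    (hπN : ∀ (ω : Ω) (x : Ahat), π (Nh ω x) = N ω (π x))
    (hiN : ∀ (ω : Ω) (m : M), Nh ω (i m) = i (NM ω m))
    (hMzero : ∀ (α β : Ω) (u v : M), μh α β (i u) (i v) = 0)
    (s : Ω → A →ₗ[k] Ahat) (hs : ∀ (ω : Ω) (a : A), π (s ω a) = a) :
    -- the actions preserve M
    (∀ (α β : Ω) (a : A) (m : M), μh α β (s α a) (i m) ∈ LinearMap.range i) ∧
    (∀ (α β : Ω) (m : M) (a : A), μh α β (i m) (s β a) ∈ LinearMap.range i) ∧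
    -- the three bimodule axioms
    (∀ (α β γ : Ω) (a b : A) (m : M),
      μh (α * β) γ (s (α * β) (μ α β a b)) (i m)
        = μh α (β * γ) (s α a) (μh β γ (s β b) (i m))) ∧
    (∀ (α β γ : Ω) (a : A) (m : M) (b : A),
      μh (α * β) γ (μh α β (s α a) (i m)) (s γ b)
        = μh α (β * γ) (s α a) (μh β γ (i m) (s γ b))) ∧
    (∀ (α β γ : Ω) (m : M) (a b : A),
      μh (α * β) γ (μh α β (i m) (s β a)) (s γ b)
        = μh α (β * γ) (i m) (s (β * γ) (μ β γ a b))) ∧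
    -- the two Nijenhuis-family-bimodule identities
    (∀ (α β : Ω) (a : A) (m : M),
      μh α β (s α (N α a)) (i (NM β m))
        = Nh (α * β) (μh α β (s α a) (i (NM β m))
            + μh α β (s α (N α a)) (i m)
            - Nh (α * β) (μh α β (s α a) (i m)))) ∧
    (∀ (α β : Ω) (m : M) (a : A),
      μh α β (i (NM α m)) (s β (N β a))
        = Nh (α * β) (μh α β (i m) (s β (N β a))
            + μh α β (i (NM α m)) (s β a)
            - Nh (α * β) (μh α β (i m) (s β a)))) :=
  abelian_extension_induces_bimodule_general μ N μh hassoch Nh hNh NM i π hexact hπmul hπN hiN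
    hMzero s hs
end

section
/- Let (Â₁, {N̂¹_ω}) and (Â₂, {N̂²_ω}) be two isomorphic abelian extensions of the Nijenhuis family Ω-associative algebra (A, {N_ω}) by (M, {N_{M,ω}}), with isomorphism ζ fixing M and covering the identity on A. If s¹ is a section of the first extension, then s² := ζ ∘ s¹ is a section of the second, and the associated 2-cocycles coincide: ψ²_{α,β}(a,b) = ψ¹_{α,β}(a,b) and χ²_ω(a) = χ¹_ω(a) for all a, b ∈ A and α, β, ω ∈ Ω, where ψ^i_{α,β}(a,b) = s^i_α(a) ·_{α,β} s^i_β(b) − s^i_{αβ}(a ·_{α,β} b) and χ^i_ω(a) = N̂^i_ω(s^i_ω(a)) − s^i_ω(N_ω(a)). -/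
theorem LinearMap.exists_apply_eq_and_map_apply_eq_of_range_eq_ker
    {R M E₁ E₂ A : Type*} [Semiring R] [AddCommMonoid M] [AddCommMonoid E₁] [AddCommMonoid E₂]
    [AddCommMonoid A] [Module R M] [Module R E₁] [Module R E₂] [Module R A]
    {i₁ : M →ₗ[R] E₁} {π₁ : E₁ →ₗ[R] A} (hexact : LinearMap.range i₁ = LinearMap.ker π₁)
    {i₂ : M →ₗ[R] E₂} (ζ : E₁ →ₗ[R] E₂) (hζi : ∀ m, ζ (i₁ m) = i₂ m)
    {x : E₁} (hx : π₁ x = 0) : ∃ m, i₁ m = x ∧ i₂ m = ζ x := by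
  obtain ⟨m, rfl⟩ : x ∈ LinearMap.range i₁ := hexact ▸ hx
  exact ⟨m, rfl, (hζi m).symm⟩

theorem isomorphic_extensions_same_cocycle_general
    {k : Type*} [Field k] {Ω : Type*} [Semigroup Ω]
    {A : Type*} [AddCommGroup A] [Module k A]
    {Ahat₁ : Type*} [AddCommGroup Ahat₁] [Module k Ahat₁]
    {Ahat₂ : Type*} [AddCommGroup Ahat₂] [Module k Ahat₂]
    {M : Type*} [AddCommGroup M] [Module k M]
    (μ : Ω → Ω → A →ₗ[k] A →ₗ[k] A)
    (N : Ω → A →ₗ[k] A)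
    -- the first extension
    (μh₁ : Ω → Ω → Ahat₁ →ₗ[k] Ahat₁ →ₗ[k] Ahat₁)
    (Nh₁ : Ω → Ahat₁ →ₗ[k] Ahat₁)
    (i₁ : M →ₗ[k] Ahat₁) (π₁ : Ahat₁ →ₗ[k] A)
    (hexact₁ : LinearMap.range i₁ = LinearMap.ker π₁)
    (hπmul₁ : ∀ (α β : Ω) (x y : Ahat₁), π₁ (μh₁ α β x y) = μ α β (π₁ x) (π₁ y))
    (hπN₁ : ∀ (ω : Ω) (x : Ahat₁), π₁ (Nh₁ ω x) = N ω (π₁ x))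
    -- the second extension
    (μh₂ : Ω → Ω → Ahat₂ →ₗ[k] Ahat₂ →ₗ[k] Ahat₂)
    (Nh₂ : Ω → Ahat₂ →ₗ[k] Ahat₂)
    (i₂ : M →ₗ[k] Ahat₂) (π₂ : Ahat₂ →ₗ[k] A)
    -- the isomorphism of extensions
    (ζ : Ω → Ahat₁ →ₗ[k] Ahat₂)
    (hζmul : ∀ (α β : Ω) (x y : Ahat₁),
      ζ (α * β) (μh₁ α β x y) = μh₂ α β (ζ α x) (ζ β y))
    (hζN : ∀ (ω : Ω) (x : Ahat₁), ζ ω (Nh₁ ω x) = Nh₂ ω (ζ ω x))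
    (hζi : ∀ (ω : Ω) (m : M), ζ ω (i₁ m) = i₂ m)
    (hζπ : ∀ (ω : Ω) (x : Ahat₁), π₂ (ζ ω x) = π₁ x)
    -- a section of the first extension
    (s₁ : Ω → A →ₗ[k] Ahat₁) (hs₁ : ∀ (ω : Ω) (a : A), π₁ (s₁ ω a) = a) :
    -- ζ ∘ s₁ is a section of the second extension
    (∀ (ω : Ω) (a : A), π₂ (ζ ω (s₁ ω a)) = a) ∧
    -- ψ² = ψ¹ as elements of M
    (∀ (α β : Ω) (a b : A), ∃ m : M,
      i₁ m = μh₁ α β (s₁ α a) (s₁ β b) - s₁ (α * β) (μ α β a b) ∧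
      i₂ m = μh₂ α β (ζ α (s₁ α a)) (ζ β (s₁ β b))
               - ζ (α * β) (s₁ (α * β) (μ α β a b))) ∧
    -- χ² = χ¹ as elements of M
    (∀ (ω : Ω) (a : A), ∃ m : M,
      i₁ m = Nh₁ ω (s₁ ω a) - s₁ ω (N ω a) ∧
      i₂ m = Nh₂ ω (ζ ω (s₁ ω a)) - ζ ω (s₁ ω (N ω a))) := by
  have lift (ω : Ω) {x : Ahat₁} (hx : π₁ x = 0) : ∃ m, i₁ m = x ∧ i₂ m = ζ ω x :=
    LinearMap.exists_apply_eq_and_map_apply_eq_of_range_eq_ker hexact₁ (ζ ω) (hζi ω) hx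
  refine ⟨fun ω a => by rw [hζπ, hs₁], fun α β a b => ?_, fun ω a => ?_⟩
  · obtain ⟨m, h₁, h₂⟩ := lift (α * β)
      (x := μh₁ α β (s₁ α a) (s₁ β b) - s₁ (α * β) (μ α β a b)) (by simp [hπmul₁, hs₁])
    exact ⟨m, h₁, by rw [h₂, map_sub, hζmul]⟩
  · obtain ⟨m, h₁, h₂⟩ := lift ω
      (x := Nh₁ ω (s₁ ω a) - s₁ ω (N ω a)) (by simp [hπN₁, hs₁])
    exact ⟨m, h₁, by rw [h₂, map_sub, hζN]⟩

/-- Two isomorphic abelian extensions give the same 2-cocycle: if `ζ` is an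
isomorphism of extensions fixing `M` and covering the identity on `A`, and `s¹`
is a section of the first extension, then `s² := ζ ∘ s¹` is a section of the
second, and the associated cocycles `(ψ, χ)` coincide (as elements of `M`). -/
theorem isomorphic_extensions_same_cocycle
    {k : Type*} [Field k] {Ω : Type*} [Semigroup Ω]
    {A : Type*} [AddCommGroup A] [Module k A]
    {Ahat₁ : Type*} [AddCommGroup Ahat₁] [Module k Ahat₁]
    {Ahat₂ : Type*} [AddCommGroup Ahat₂] [Module k Ahat₂]
    {M : Type*} [AddCommGroup M] [Module k M]
    (μ : Ω → Ω → A →ₗ[k] A →ₗ[k] A)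
    (hassoc : ∀ (α β γ : Ω) (a b c : A),
      μ (α * β) γ (μ α β a b) c = μ α (β * γ) a (μ β γ b c))
    (N : Ω → A →ₗ[k] A) (hN : NijenhuisFamily μ N)
    (NM : Ω → M →ₗ[k] M)
    -- the first extension
    (μh₁ : Ω → Ω → Ahat₁ →ₗ[k] Ahat₁ →ₗ[k] Ahat₁)
    (hassoch₁ : ∀ (α β γ : Ω) (x y z : Ahat₁),
      μh₁ (α * β) γ (μh₁ α β x y) z = μh₁ α (β * γ) x (μh₁ β γ y z))
    (Nh₁ : Ω → Ahat₁ →ₗ[k] Ahat₁) (hNh₁ : NijenhuisFamily μh₁ Nh₁)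
    (i₁ : M →ₗ[k] Ahat₁) (π₁ : Ahat₁ →ₗ[k] A)
    (hi₁ : Function.Injective i₁) (hπ₁ : Function.Surjective π₁)
    (hexact₁ : LinearMap.range i₁ = LinearMap.ker π₁)
    (hπmul₁ : ∀ (α β : Ω) (x y : Ahat₁), π₁ (μh₁ α β x y) = μ α β (π₁ x) (π₁ y))
    (hπN₁ : ∀ (ω : Ω) (x : Ahat₁), π₁ (Nh₁ ω x) = N ω (π₁ x))
    (hiN₁ : ∀ (ω : Ω) (m : M), Nh₁ ω (i₁ m) = i₁ (NM ω m))
    (hMzero₁ : ∀ (α β : Ω) (u v : M), μh₁ α β (i₁ u) (i₁ v) = 0)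
    -- the second extension
    (μh₂ : Ω → Ω → Ahat₂ →ₗ[k] Ahat₂ →ₗ[k] Ahat₂)
    (hassoch₂ : ∀ (α β γ : Ω) (x y z : Ahat₂),
      μh₂ (α * β) γ (μh₂ α β x y) z = μh₂ α (β * γ) x (μh₂ β γ y z))
    (Nh₂ : Ω → Ahat₂ →ₗ[k] Ahat₂) (hNh₂ : NijenhuisFamily μh₂ Nh₂)
    (i₂ : M →ₗ[k] Ahat₂) (π₂ : Ahat₂ →ₗ[k] A)
    (hi₂ : Function.Injective i₂) (hπ₂ : Function.Surjective π₂)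
    (hexact₂ : LinearMap.range i₂ = LinearMap.ker π₂)
    (hπmul₂ : ∀ (α β : Ω) (x y : Ahat₂), π₂ (μh₂ α β x y) = μ α β (π₂ x) (π₂ y))
    (hπN₂ : ∀ (ω : Ω) (x : Ahat₂), π₂ (Nh₂ ω x) = N ω (π₂ x))
    (hiN₂ : ∀ (ω : Ω) (m : M), Nh₂ ω (i₂ m) = i₂ (NM ω m))
    (hMzero₂ : ∀ (α β : Ω) (u v : M), μh₂ α β (i₂ u) (i₂ v) = 0)
    -- the isomorphism of extensions
    (ζ : Ω → Ahat₁ →ₗ[k] Ahat₂)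
    (hζbij : ∀ ω : Ω, Function.Bijective (ζ ω))
    (hζmul : ∀ (α β : Ω) (x y : Ahat₁),
      ζ (α * β) (μh₁ α β x y) = μh₂ α β (ζ α x) (ζ β y))
    (hζN : ∀ (ω : Ω) (x : Ahat₁), ζ ω (Nh₁ ω x) = Nh₂ ω (ζ ω x))
    (hζi : ∀ (ω : Ω) (m : M), ζ ω (i₁ m) = i₂ m)
    (hζπ : ∀ (ω : Ω) (x : Ahat₁), π₂ (ζ ω x) = π₁ x)
    -- a section of the first extension
    (s₁ : Ω → A →ₗ[k] Ahat₁) (hs₁ : ∀ (ω : Ω) (a : A), π₁ (s₁ ω a) = a) :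
    -- ζ ∘ s₁ is a section of the second extension
    (∀ (ω : Ω) (a : A), π₂ (ζ ω (s₁ ω a)) = a) ∧
    -- ψ² = ψ¹ as elements of M
    (∀ (α β : Ω) (a b : A), ∃ m : M,
      i₁ m = μh₁ α β (s₁ α a) (s₁ β b) - s₁ (α * β) (μ α β a b) ∧
      i₂ m = μh₂ α β (ζ α (s₁ α a)) (ζ β (s₁ β b))
               - ζ (α * β) (s₁ (α * β) (μ α β a b))) ∧
    -- χ² = χ¹ as elements of M
    (∀ (ω : Ω) (a : A), ∃ m : M,
      i₁ m = Nh₁ ω (s₁ ω a) - s₁ ω (N ω a) ∧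
      i₂ m = Nh₂ ω (ζ ω (s₁ ω a)) - ζ ω (s₁ ω (N ω a))) :=
  isomorphic_extensions_same_cocycle_general μ N μh₁ Nh₁ i₁ π₁ hexact₁ hπmul₁ hπN₁ μh₂ Nh₂ i₂ π₂ ζ
    hζmul hζN hζi hζπ s₁ hs₁
end
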